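/- arXiv:2405.06069 — 6 statements merged into one kernel-verified Lean document; each statement's English description precedes it below -/
import Mathlib

section
/- Fekete's criterion: If all contiguous minors of A of order at most k are positive, then A is TP_k (all minors of order at most k are positive). -/
open Matrix

open Matrix

/-- `A` is totally positive: every minor (with strictly increasing row and
column index selections) is positive. -/
def IsTP {α β : Type} [LinearOrder α] [LinearOrder β] (A : Matrix α β ℝ) : Prop :=
  ∀ (l : ℕ) (r : Fin l → α) (c : Fin l → β), StrictMono r → StrictMono c →
    0 < (A.submatrix r c).det

/-- `A` is `TP_k`: every minor of order at most `k` is positive. -/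
def IsTPk {α β : Type} [LinearOrder α] [LinearOrder β] (A : Matrix α β ℝ) (k : ℕ) : Prop :=
  ∀ (l : ℕ), l ≤ k → ∀ (r : Fin l → α) (c : Fin l → β), StrictMono r → StrictMono c →
    0 < (A.submatrix r c).det

/-- `k`-subsets of `{1,…,n}`, encoded as strictly increasing tuples. -/
abbrev STuple (n k : ℕ) : Type := {f : Fin k → Fin n // StrictMono f}

noncomputable instance lexPi {n k : ℕ} : LinearOrder (Lex (Fin k → Fin n)) :=
  @Pi.Lex.linearOrder (Fin k) (fun _ => Fin n) _
    Finite.to_wellFoundedLT _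

/-- The lexicographic linear order on `k`-subsets. -/
noncomputable instance {n k : ℕ} : LinearOrder (STuple n k) :=
  LinearOrder.lift' (fun s => toLex s.1) (fun _ _ h => Subtype.ext (congrArg ofLex h))

/-- The `k`-th compound matrix of `A`: the matrix of all `k×k` minors of `A`,
rows and columns indexed by `k`-subsets ordered lexicographically. -/
noncomputable def compound {n : ℕ} (A : Matrix (Fin n) (Fin n) ℝ) (k : ℕ) :
    Matrix (STuple n k) (STuple n k) ℝ :=
  fun s t => (A.submatrix s.1 t.1).det

/-- The `k`-th Dodgson condensation matrix of `A`: the `(n-k) × (n-k)` matrix of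
contiguous minors of order `k+1` (0-indexed positions). -/
noncomputable def Dmat {n : ℕ} (A : Matrix (Fin n) (Fin n) ℝ) (k : ℕ) :
    Matrix (Fin (n - k)) (Fin (n - k)) ℝ :=
  fun i j =>
    (A.submatrix
      (fun p : Fin (k + 1) => (⟨i.1 + p.1, by have := i.2; have := p.2; omega⟩ : Fin n))
      (fun p : Fin (k + 1) => (⟨j.1 + p.1, by have := j.2; have := p.2; omega⟩ : Fin n))).det

/-- The contiguous minor of `A` of order `sz` with top-left position `(i, j)`
(0-indexed): `det A[{i,…,i+sz-1},{j,…,j+sz-1}]`. -/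
noncomputable def cminor {n : ℕ} (A : Matrix (Fin n) (Fin n) ℝ) (sz i j : ℕ)
    (hi : i + sz ≤ n) (hj : j + sz ≤ n) : ℝ :=
  (A.submatrix (fun p : Fin sz => (⟨i + p.1, by have := p.2; omega⟩ : Fin n))
               (fun p : Fin sz => (⟨j + p.1, by have := p.2; omega⟩ : Fin n))).det

/-!
Induction on the order. Fix the rows `r` of an `(L+1)`-minor whose columns `c` have a gap, and
insert a new column into the gap to get `L+2` columns `Γ`. Bordering `A[r, Γ]` by the unit row at
the new column and applying the Desnanot–Jacobi identity gives a three-term Plücker relation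
`det A[r, c] · E = D₁ · M₁ + D₂ · M₂`, where `E, M₁, M₂` are `L`-minors and `D₁, D₂` are the
`(L+1)`-minors on `Γ` without its last, resp. first, column; both span fewer columns than `c`.
Induction on the span `c_last - c_0` therefore reduces to contiguous columns, and the same argument
applied to `Aᵀ` reduces to contiguous rows.
-/

namespace Matrix

variable {K : Type*} [Field K]

theorem det_eq_of_row_eq_single {n : ℕ} (N : Matrix (Fin (n + 1)) (Fin (n + 1)) K)
    (i t : Fin (n + 1)) (h : N i = Pi.single t 1) :
    N.det = (-1) ^ (i + t : ℕ) * (N.submatrix i.succAbove t.succAbove).det := by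
  rw [det_succ_row N i, Finset.sum_eq_single t (fun j _ hj => by simp [h, hj]) (by simp)]
  simp [h]

variable {ι : Type*} [Fintype ι] [DecidableEq ι]

theorem det_fromBlocks_submatrix_border (E : Matrix ι ι K) [Invertible E]
    (B : Matrix ι (Fin 2) K) (C : Matrix (Fin 2) ι K) (D : Matrix (Fin 2) (Fin 2) K) (i j : Fin 2) :
    ((fromBlocks E B C D).submatrix (Sum.map id fun _ : Fin 1 => i)
      (Sum.map id fun _ : Fin 1 => j)).det = E.det * (D - C * ⅟E * B) i j := by
  have : (fromBlocks E B C D).submatrix (Sum.map id fun _ : Fin 1 => i)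
      (Sum.map id fun _ : Fin 1 => j) =
      fromBlocks E (B.submatrix id fun _ => j) (C.submatrix (fun _ => i) id)
        (D.submatrix (fun _ => i) fun _ => j) := by
    ext (a | a) (b | b) <;> rfl
  rw [this, det_fromBlocks₁₁, det_fin_one]
  simp [Matrix.mul_apply]

theorem desnanot_jacobi_fromBlocks (E : Matrix ι ι K) (hE : E.det ≠ 0)
    (B : Matrix ι (Fin 2) K) (C : Matrix (Fin 2) ι K) (D : Matrix (Fin 2) (Fin 2) K) :
    let F := fromBlocks E B C D
    let border (i j : Fin 2) :=
      (F.submatrix (Sum.map id fun _ : Fin 1 => i) (Sum.map id fun _ : Fin 1 => j)).det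
    F.det * E.det = border 0 0 * border 1 1 - border 0 1 * border 1 0 := by
  have := E.invertibleOfIsUnitDet (isUnit_iff_ne_zero.mpr hE)
  simp only [det_fromBlocks_submatrix_border, det_fromBlocks₁₁, det_fin_two]
  ring

theorem desnanot_jacobi {n : ℕ} (M : Matrix (Fin (n + 2)) (Fin (n + 2)) K)
    (hE : (M.submatrix (fun i : Fin n => i.succ.castSucc) fun i => i.succ.castSucc).det ≠ 0) :
    M.det * (M.submatrix (fun i : Fin n => i.succ.castSucc) fun i => i.succ.castSucc).det =
      (M.submatrix Fin.succ Fin.succ).det * (M.submatrix Fin.castSucc Fin.castSucc).det -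
      (M.submatrix Fin.succ Fin.castSucc).det * (M.submatrix Fin.castSucc Fin.succ).det := by
  -- the two border indices `0, 1 : Fin 2` stand for the last and the first row and column of `M`
  set e : Fin n ⊕ Fin 2 ≃ Fin (n + 2) := finSumFinEquiv.trans (finRotate _)
  have he_inl : (fun i => e (Sum.inl i)) = fun i : Fin n => i.succ.castSucc := by
    funext i; ext; simp [e, finRotate_apply, Fin.val_add]
  have he_last : e ∘ Sum.map id (fun _ : Fin 1 => 0) = Fin.succ ∘ finSumFinEquiv := by
    funext x; rcases x with i | i <;> ext <;> simp [e, finRotate_apply, Fin.val_add]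
  have he_first : e ∘ Sum.map id (fun _ : Fin 1 => 1) =
      Fin.castSucc ∘ finRotate (n + 1) ∘ finSumFinEquiv := by
    funext x; rcases x with i | i <;> ext <;> simp [e, finRotate_apply, Fin.val_add]
    rw [Nat.mod_eq_of_lt (by omega), Nat.mod_eq_of_lt (by omega)]
  have hsign : ((Equiv.Perm.sign (finRotate (n + 1)) : ℤ) : K) ^ 2 = 1 := by
    rw [← Int.cast_pow, ← Units.val_pow_eq_pow_val, Int.units_sq, Units.val_one, Int.cast_one]
  have h₁₁ : (M.submatrix e e).toBlocks₁₁ =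
      M.submatrix (fun i : Fin n => i.succ.castSucc) fun i => i.succ.castSucc := by
    rw [← he_inl]; rfl
  have key := desnanot_jacobi_fromBlocks ((M.submatrix e e).toBlocks₁₁) (h₁₁ ▸ hE)
    (M.submatrix e e).toBlocks₁₂ (M.submatrix e e).toBlocks₂₁ (M.submatrix e e).toBlocks₂₂
  simp only [fromBlocks_toBlocks] at key
  simp only [submatrix_submatrix, he_last, he_first, h₁₁, det_submatrix_equiv_self] at key
  set σ := finRotate (n + 1)
  set ε : Fin n ⊕ Fin 1 ≃ Fin (n + 1) := finSumFinEquiv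
  have h₀₀ : (M.submatrix (Fin.succ ∘ ε) (Fin.succ ∘ ε)).det =
      (M.submatrix Fin.succ Fin.succ).det :=
    det_submatrix_equiv_self ε (M.submatrix Fin.succ Fin.succ)
  have h₁₁' : (M.submatrix (Fin.castSucc ∘ σ ∘ ε) (Fin.castSucc ∘ σ ∘ ε)).det =
      (M.submatrix Fin.castSucc Fin.castSucc).det :=
    det_submatrix_equiv_self (ε.trans σ) (M.submatrix Fin.castSucc Fin.castSucc)
  have h₀₁ : (M.submatrix (Fin.succ ∘ ε) (Fin.castSucc ∘ σ ∘ ε)).det =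
      Equiv.Perm.sign σ * (M.submatrix Fin.succ Fin.castSucc).det :=
    (det_submatrix_equiv_self ε ((M.submatrix Fin.succ Fin.castSucc).submatrix id σ)).trans
      (det_permute' σ _)
  have h₁₀ : (M.submatrix (Fin.castSucc ∘ σ ∘ ε) (Fin.succ ∘ ε)).det =
      Equiv.Perm.sign σ * (M.submatrix Fin.castSucc Fin.succ).det :=
    (det_submatrix_equiv_self ε ((M.submatrix Fin.castSucc Fin.succ).submatrix σ id)).trans
      (det_permute σ _)
  rw [h₀₀, h₁₁', h₀₁, h₁₀] at key
  linear_combination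
    key - (M.submatrix Fin.succ Fin.castSucc).det * (M.submatrix Fin.castSucc Fin.succ).det * hsign

theorem plucker_three_term {L : ℕ} (B : Matrix (Fin (L + 1)) (Fin (L + 2)) K) (u : Fin L)
    (hE : (B.submatrix Fin.succ fun j : Fin L => j.succ.castSucc).det ≠ 0) :
    (B.submatrix id (u.castSucc.succ).succAbove).det *
        (B.submatrix Fin.succ fun j : Fin L => j.succ.castSucc).det =
      (B.submatrix id Fin.castSucc).det *
          (B.submatrix Fin.succ (Fin.succ ∘ u.castSucc.succAbove)).det +
        (B.submatrix id Fin.succ).det *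
          (B.submatrix Fin.succ (Fin.castSucc ∘ u.succ.succAbove)).det := by
  set s := u.castSucc.succ
  -- append the unit row `e_s` to make `B` square
  let C : Matrix (Fin (L + 2)) (Fin (L + 2)) K :=
    Fin.snoc (α := fun _ => Fin (L + 2) → K) B (Pi.single s 1)
  have hC : ∀ i, C i.castSucc = B i := Fin.snoc_castSucc (α := fun _ => Fin (L + 2) → K) _ _
  have hC_last : C (Fin.last _) = Pi.single s 1 :=
    Fin.snoc_last (α := fun _ => Fin (L + 2) → K) _ _
  have hint : (C.submatrix (fun i : Fin L => i.succ.castSucc) fun i => i.succ.castSucc) =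
      B.submatrix Fin.succ fun j : Fin L => j.succ.castSucc := by
    ext i j; exact congrFun (hC i.succ) _
  have key := desnanot_jacobi C (by rwa [hint])
  have hdet : C.det = (-1) ^ (L + u) * (B.submatrix id s.succAbove).det := by
    rw [det_eq_of_row_eq_single C _ s hC_last, Fin.succAbove_last]
    have : C.submatrix Fin.castSucc s.succAbove = B.submatrix id s.succAbove := by
      ext i j; simp [hC]
    rw [this, Fin.val_last, show L + 1 + (s : ℕ) = L + u + 2 by simp [s]; ring, pow_add]
    norm_num
  have h₀₀ : (C.submatrix Fin.succ Fin.succ).det =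
      (-1) ^ (L + u) * (B.submatrix Fin.succ (Fin.succ ∘ u.castSucc.succAbove)).det := by
    rw [det_eq_of_row_eq_single _ (Fin.last _) u.castSucc, Fin.succAbove_last]
    · congr 2
      ext i j; simp only [submatrix_apply, Function.comp_apply, Fin.succ_castSucc, hC]
    · funext j; simp [Fin.succ_last, hC_last, Pi.single_apply, s]
  have h₀₁ : (C.submatrix Fin.succ Fin.castSucc).det =
      -((-1) ^ (L + u) * (B.submatrix Fin.succ (Fin.castSucc ∘ u.succ.succAbove)).det) := by
    rw [det_eq_of_row_eq_single _ (Fin.last _) u.succ, Fin.succAbove_last]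
    · have : (C.submatrix Fin.succ Fin.castSucc).submatrix Fin.castSucc u.succ.succAbove =
          B.submatrix Fin.succ (Fin.castSucc ∘ u.succ.succAbove) := by
        ext i j; simp only [submatrix_apply, Function.comp_apply, Fin.succ_castSucc, hC]
      rw [this, Fin.val_last, Fin.val_succ, ← add_assoc, pow_succ]
      ring
    · funext j
      rw [submatrix_apply, Fin.succ_last, hC_last,
        show s = u.succ.castSucc from Fin.succ_castSucc u]
      simp only [Pi.single_apply, Fin.castSucc_inj]
  have h₁₁ : C.submatrix Fin.castSucc Fin.castSucc = B.submatrix id Fin.castSucc := by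
    ext i j; simp [hC]
  have h₁₀ : C.submatrix Fin.castSucc Fin.succ = B.submatrix id Fin.succ := by
    ext i j; simp [hC]
  rw [hdet, h₀₀, h₀₁, h₁₁, h₁₀, hint] at key
  refine mul_left_cancel₀ (pow_ne_zero (L + u) (neg_ne_zero.mpr one_ne_zero)) ?_
  linear_combination key

end Matrix

theorem Fin.exists_gap_of_strictMono {k n : ℕ} {f : Fin (k + 1) → Fin n} (hf : StrictMono f)
    (h : ¬ ∀ i, (f i : ℕ) = f 0 + i) : ∃ p : Fin k, (f p.castSucc : ℕ) + 1 < f p.succ := by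
  contrapose! h
  intro i
  induction i using Fin.induction with
  | zero => simp
  | succ p ih =>
    have hlt := Fin.lt_def.mp (hf p.castSucc_lt_succ)
    have hle := h p
    simp only [Fin.val_succ, Fin.val_castSucc] at hlt hle ih ⊢
    omega

theorem Fin.exists_strictMono_extend_of_gap {k n : ℕ} {f : Fin (k + 1) → Fin n}
    (hf : StrictMono f) (p : Fin k) (hp : (f p.castSucc : ℕ) + 1 < f p.succ) :
    ∃ g : Fin (k + 2) → Fin n, StrictMono g ∧ g ∘ p.castSucc.succ.succAbove = f ∧
      f 0 = g 0 ∧ f (Fin.last k) = g (Fin.last _) := by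
  have hx : (f p.castSucc : ℕ) + 1 < n := by omega
  set g := Fin.insertNth (α := fun _ => Fin n) p.castSucc.succ ⟨f p.castSucc + 1, hx⟩ f
  have hgf : g ∘ p.castSucc.succ.succAbove = f := Fin.insertNth_comp_succAbove _ _ _
  refine ⟨g, Fin.strictMono_insertNth hf p _ (by simp [Fin.lt_def]) (by simp [Fin.lt_def]; omega),
    hgf, ?_, ?_⟩
  · rw [← hgf, Function.comp_apply, Fin.succAbove_ne_zero_zero (Fin.succ_ne_zero _)]
  · rw [← hgf, Function.comp_apply,
      Fin.succAbove_ne_last_last (Fin.ne_of_val_ne (by simp; omega))]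

theorem det_submatrix_pos_of_contiguous_cols {m n L : ℕ} (A : Matrix (Fin m) (Fin n) ℝ)
    (hL : ∀ (r : Fin L → Fin m) (c : Fin L → Fin n), StrictMono r → StrictMono c →
      0 < (A.submatrix r c).det)
    {r : Fin (L + 1) → Fin m} (hr : StrictMono r)
    (hcontig : ∀ c : Fin (L + 1) → Fin n, (∀ i, (c i : ℕ) = c 0 + i) → 0 < (A.submatrix r c).det)
    {c : Fin (L + 1) → Fin n} (hc : StrictMono c) : 0 < (A.submatrix r c).det := by
  induction hd : (c (Fin.last L) : ℕ) - c 0 using Nat.strong_induction_on generalizing c with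
  | _ d ih =>
  by_cases hcont : ∀ i, (c i : ℕ) = c 0 + i
  · exact hcontig c hcont
  obtain ⟨p, hp⟩ := Fin.exists_gap_of_strictMono hc hcont
  obtain ⟨Γ, hΓ, hΓc, hΓ0, hΓlast⟩ := Fin.exists_strictMono_extend_of_gap hc p hp
  have hlt₁ : ((Γ ∘ Fin.castSucc) (Fin.last L) : ℕ) - (Γ ∘ Fin.castSucc) 0 < d := by
    have := hΓ (Fin.castSucc_lt_last (Fin.last L))
    have := hΓ.monotone (Fin.zero_le (Fin.last L).castSucc)
    simp only [Function.comp_apply, Fin.castSucc_zero]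
    omega
  have hlt₂ : ((Γ ∘ Fin.succ) (Fin.last L) : ℕ) - (Γ ∘ Fin.succ) 0 < d := by
    have := hΓ (show (0 : Fin (L + 2)) < 1 from Fin.zero_lt_one)
    have := hΓ.monotone (Fin.le_last 1)
    rw [Function.comp_apply, Function.comp_apply, Fin.succ_zero_eq_one]
    change (Γ (Fin.last (L + 1)) : ℕ) - Γ 1 < d
    omega
  have hDf := ih _ hlt₁ (hΓ.comp Fin.strictMono_castSucc) rfl
  have hDl := ih _ hlt₂ (hΓ.comp Fin.strictMono_succ) rfl
  have hM₁ := hL _ _ (hr.comp Fin.strictMono_succ)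
    (hΓ.comp (Fin.strictMono_succ.comp (Fin.strictMono_succAbove p.castSucc)))
  have hM₂ := hL _ _ (hr.comp Fin.strictMono_succ)
    (hΓ.comp (Fin.strictMono_castSucc.comp (Fin.strictMono_succAbove p.succ)))
  have hE := hL (r ∘ Fin.succ) (Γ ∘ fun j : Fin L => j.succ.castSucc)
    (hr.comp Fin.strictMono_succ) (hΓ.comp (Fin.strictMono_castSucc.comp Fin.strictMono_succ))
  have key := Matrix.plucker_three_term (A.submatrix r Γ) p (by simpa using hE.ne')
  simp only [submatrix_submatrix, Function.comp_id, hΓc] at key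
  exact pos_of_mul_pos_left (key ▸ add_pos (mul_pos hDf hM₁) (mul_pos hDl hM₂)) hE.le

/-- **Fekete's criterion.** If all contiguous minors of `A` of order at most `k`
are positive, then `A` is `TP_k`: all minors of order at most `k` are positive. -/
theorem fekete_criterion {m n k : ℕ} (A : Matrix (Fin m) (Fin n) ℝ)
    (hcontig : ∀ (l : ℕ), l ≤ k → ∀ (i j : ℕ) (hi : i + l ≤ m) (hj : j + l ≤ n),
      0 < (A.submatrix
        (fun p : Fin l => (⟨i + p.1, by have := p.2; omega⟩ : Fin m))
        (fun p : Fin l => (⟨j + p.1, by have := p.2; omega⟩ : Fin n))).det) :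
    IsTPk A k := by
  intro l hl
  induction l with
  | zero => intro r c _ _; simp
  | succ L ih =>
    have hL := ih (by omega)
    have hbase : ∀ (r : Fin (L + 1) → Fin m) (c : Fin (L + 1) → Fin n),
        (∀ i, (r i : ℕ) = r 0 + i) → (∀ i, (c i : ℕ) = c 0 + i) → 0 < (A.submatrix r c).det := by
      intro r c hr hc
      have hm := (r (Fin.last L)).isLt
      have hn := (c (Fin.last L)).isLt
      rw [hr, Fin.val_last] at hm
      rw [hc, Fin.val_last] at hn
      convert hcontig (L + 1) hl (r 0) (c 0) (by omega) (by omega) using 3 <;> ext p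
      exacts [hr p, hc p]
    intro r c hr hc
    refine det_submatrix_pos_of_contiguous_cols A hL hr (fun c hc' => ?_) hc
    have hc'_mono : StrictMono c := fun i j hij => by
      have := hc' i; have := hc' j; omega
    rw [← det_transpose, transpose_submatrix]
    refine det_submatrix_pos_of_contiguous_cols Aᵀ (fun r c hr hc => ?_) hc'_mono
      (fun r' hr' => ?_) hr
    · rw [← transpose_submatrix, det_transpose]; exact hL c r hc hr
    · rw [← transpose_submatrix, det_transpose]; exact hbase r' c hr' hc'
end

section
/- Dodgson condensation formula: if det(A_22) ≠ 0, then det A = (det B · det E − det C · det D) / det A_22, where A_22 = A[{2,...,n-1}], B, C, D, E are the four (n-1)-by-(n-1) corner contiguous submatrices of A. -/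
open Matrix

open Matrix

/-!
Order the indices as (interior, first, last). The interior block `P = A₂₂` is invertible, and
by the Schur complement formula `det A = det P · det S` with `S` the `2 × 2` Schur complement of
`P`. Each corner minor `B, C, D, E` is, up to reordering rows and columns, `P` bordered by one
row and one column, so its determinant is `det P` times one entry of `S`; the reorderings of `C`
and `D` have the same sign. Hence `det B det E - det C det D = (det P)² det S = det P det A`.
-/

namespace Matrix

variable {m n ι κ R : Type*} [Fintype m] [DecidableEq m] [CommRing R]

def schurComplement (M : Matrix (m ⊕ n) (m ⊕ n) R) [Invertible M.toBlocks₁₁] : Matrix n n R :=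
  M.toBlocks₂₂ - M.toBlocks₂₁ * ⅟M.toBlocks₁₁ * M.toBlocks₁₂

theorem det_eq_det_toBlocks₁₁_mul_det_schurComplement [Fintype n] [DecidableEq n]
    (M : Matrix (m ⊕ n) (m ⊕ n) R) [Invertible M.toBlocks₁₁] :
    M.det = M.toBlocks₁₁.det * M.schurComplement.det := by
  conv_lhs => rw [← fromBlocks_toBlocks M]
  exact det_fromBlocks₁₁ _ _ _ _

def borderSubmatrix (M : Matrix (m ⊕ n) (m ⊕ n) R) (i j : n) : Matrix (m ⊕ Unit) (m ⊕ Unit) R :=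
  M.submatrix (Sum.map id fun _ => i) (Sum.map id fun _ => j)

theorem det_borderSubmatrix (M : Matrix (m ⊕ n) (m ⊕ n) R) [Invertible M.toBlocks₁₁]
    (i j : n) : (M.borderSubmatrix i j).det = M.toBlocks₁₁.det * M.schurComplement i j := by
  let : Invertible (M.borderSubmatrix i j).toBlocks₁₁ := ‹Invertible M.toBlocks₁₁›
  rw [det_eq_det_toBlocks₁₁_mul_det_schurComplement, det_unique (schurComplement _)]
  rfl

theorem det_mul_det_toBlocks₁₁ (M : Matrix (m ⊕ Fin 2) (m ⊕ Fin 2) R)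
    [Invertible M.toBlocks₁₁] :
    M.det * M.toBlocks₁₁.det =
      (M.borderSubmatrix 0 0).det * (M.borderSubmatrix 1 1).det
        - (M.borderSubmatrix 0 1).det * (M.borderSubmatrix 1 0).det := by
  simp only [det_borderSubmatrix, det_eq_det_toBlocks₁₁_mul_det_schurComplement M, det_fin_two]
  ring

theorem det_submatrix_mul_det_submatrix [Fintype ι] [DecidableEq ι] [Fintype κ] [DecidableEq κ]
    (M N : Matrix κ κ R) (e₁ e₂ : ι ≃ κ) :
    (M.submatrix e₁ e₂).det * (N.submatrix e₂ e₁).det = M.det * N.det := by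
  set σ : Equiv.Perm κ := e₁.symm.trans e₂
  have hM : M.submatrix e₁ e₂ = (M.submatrix id σ).submatrix e₁ e₁ := by ext; simp [σ]
  have hN : N.submatrix e₂ e₁ = (N.submatrix id σ.symm).submatrix e₂ e₂ := by ext; simp [σ]
  have hsign : ((Equiv.Perm.sign σ : ℤ) : R) * (Equiv.Perm.sign σ : ℤ) = 1 := by
    rw [← Int.cast_mul, ← Units.val_mul, Int.units_mul_self, Units.val_one, Int.cast_one]
  rw [hM, hN, det_submatrix_equiv_self, det_submatrix_equiv_self, det_permute', det_permute',
    Equiv.Perm.sign_symm]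
  linear_combination M.det * N.det * hsign

end Matrix

def finSumUnitEquiv (n : ℕ) : Fin n ⊕ Unit ≃ Fin (n + 1) :=
  (Equiv.optionEquivSumPUnit (Fin n)).symm.trans (finSuccEquiv n).symm

def finSumUnitEquivLast (n : ℕ) : Fin n ⊕ Unit ≃ Fin (n + 1) :=
  (Equiv.optionEquivSumPUnit (Fin n)).symm.trans finSuccEquivLast.symm

noncomputable def finInteriorSumEndsEquiv (m : ℕ) : Fin m ⊕ Fin 2 ≃ Fin (m + 2) :=
  Equiv.ofBijective (Sum.elim (fun i => i.castSucc.succ) ![0, Fin.last (m + 1)]) <| by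
    refine (Fintype.bijective_iff_injective_and_card _).2 ⟨?_, by simp⟩
    rintro (i | i) (j | j) hij
    · simpa [Fin.ext_iff] using hij
    · fin_cases j <;> simp [Fin.ext_iff] at hij; omega
    · fin_cases i <;> simp [Fin.ext_iff] at hij; omega
    · fin_cases i <;> fin_cases j <;> simp_all [Fin.ext_iff]

theorem finInteriorSumEndsEquiv_comp_map_zero (m : ℕ) :
    finInteriorSumEndsEquiv m ∘ Sum.map id (fun _ => 0) = Fin.castSucc ∘ finSumUnitEquiv m := by
  ext (i | _) <;> simp [finInteriorSumEndsEquiv, finSumUnitEquiv]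

theorem finInteriorSumEndsEquiv_comp_map_one (m : ℕ) :
    finInteriorSumEndsEquiv m ∘ Sum.map id (fun _ => 1) = Fin.succ ∘ finSumUnitEquivLast m := by
  ext (i | _) <;> simp [finInteriorSumEndsEquiv, finSumUnitEquivLast]

theorem Matrix.desnanot_jacobi_s3 {m : ℕ} {R : Type*} [CommRing R]
    (A : Matrix (Fin (m + 2)) (Fin (m + 2)) R)
    (h : IsUnit (A.submatrix (fun i : Fin m => i.castSucc.succ) fun i => i.castSucc.succ).det) :
    A.det * (A.submatrix (fun i : Fin m => i.castSucc.succ) fun i => i.castSucc.succ).det =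
      (A.submatrix Fin.castSucc Fin.castSucc).det * (A.submatrix Fin.succ Fin.succ).det
        - (A.submatrix Fin.castSucc Fin.succ).det * (A.submatrix Fin.succ Fin.castSucc).det := by
  set e := finInteriorSumEndsEquiv m
  let : Invertible (A.submatrix e e).toBlocks₁₁ := invertibleOfIsUnitDet _ h
  have border (i j : Fin 2) : (A.submatrix e e).borderSubmatrix i j =
      A.submatrix (e ∘ Sum.map id fun _ => i) (e ∘ Sum.map id fun _ => j) := rfl
  have key := det_mul_det_toBlocks₁₁ (A.submatrix e e)
  rw [border, border, border, border, finInteriorSumEndsEquiv_comp_map_zero,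
    finInteriorSumEndsEquiv_comp_map_one, ← submatrix_submatrix, ← submatrix_submatrix,
    ← submatrix_submatrix, ← submatrix_submatrix, det_submatrix_equiv_self,
    det_submatrix_equiv_self, det_submatrix_mul_det_submatrix, det_submatrix_equiv_self] at key
  exact key

/-- **Dodgson condensation formula:** if `det A₂₂ ≠ 0` then
`det A = (det B · det E − det C · det D) / det A₂₂`. -/
theorem dodgson_condensation_formula {m : ℕ} (A : Matrix (Fin (m + 2)) (Fin (m + 2)) ℝ)
    (h : (A.submatrix (fun i : Fin m => (⟨i.1 + 1, by have := i.2; omega⟩ : Fin (m + 2)))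
                      (fun j : Fin m => (⟨j.1 + 1, by have := j.2; omega⟩ : Fin (m + 2)))).det ≠ 0) :
    A.det =
      ((A.submatrix Fin.castSucc Fin.castSucc).det * (A.submatrix Fin.succ Fin.succ).det
        - (A.submatrix Fin.castSucc Fin.succ).det * (A.submatrix Fin.succ Fin.castSucc).det)
      / (A.submatrix (fun i : Fin m => (⟨i.1 + 1, by have := i.2; omega⟩ : Fin (m + 2)))
                     (fun j : Fin m => (⟨j.1 + 1, by have := j.2; omega⟩ : Fin (m + 2)))).det := by
  rw [eq_div_iff h]
  exact A.desnanot_jacobi_s3 h.isUnit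
end

section
/- If A is an n-by-n totally positive matrix, then its (n-1)st compound C_{n-1}(A) is totally positive. -/
open Matrix

open Matrix

/-! Index the rows and columns of `C_{n-1}(A)` by the omitted index: the lexicographic order on
`(n-1)`-subsets reverses the natural order of the omitted indices. The entry with omitted row `p`
and column `q` is the cofactor `(-1)^(p+q) det A (A⁻¹)_{qp}`, so an `l × l` minor of `C_{n-1}(A)`
is `det A ^ l` times a sign-twisted minor of `A⁻¹`. Jacobi's complementary minor formula turns
that into `(det A)⁻¹` times the complementary minor of `A`, with a sign that cancels the twist.
So the minor is `det A ^ (l-1)` times a minor of `A`, hence positive. -/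

open Equiv

namespace Matrix

variable {R : Type*} [CommRing R] {m n ι : Type*} [Fintype m] [Fintype n] [Fintype ι]
  [DecidableEq m] [DecidableEq n] [DecidableEq ι]

theorem det_mul_det_toBlocks₁₁_inv (M : Matrix (m ⊕ n) (m ⊕ n) R) (hM : IsUnit M.det) :
    M.det * M⁻¹.toBlocks₁₁.det = M.toBlocks₂₂.det := by
  set N := M⁻¹
  have hblocks : M * N = 1 := M.mul_nonsing_inv hM
  rw [← fromBlocks_toBlocks M, ← fromBlocks_toBlocks N, fromBlocks_multiply,
    ← fromBlocks_one, fromBlocks_inj] at hblocks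
  obtain ⟨h₁₁, -, h₂₁, -⟩ := hblocks
  -- Completing the first block column of `M⁻¹` by `[0; 1]` makes the product block triangular.
  have hprod : M * fromBlocks N.toBlocks₁₁ 0 N.toBlocks₂₁ 1 =
      fromBlocks 1 M.toBlocks₁₂ 0 M.toBlocks₂₂ := by
    conv_lhs => rw [← fromBlocks_toBlocks M]
    rw [fromBlocks_multiply, h₁₁, h₂₁]
    simp
  simpa [det_fromBlocks_zero₁₂, det_fromBlocks_zero₂₁] using congrArg det hprod

theorem sign_mul_det_mul_det_inv_submatrix (A : Matrix ι ι R) (hA : IsUnit A.det)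
    (e f : m ⊕ n ≃ ι) :
    Perm.sign (e.symm.trans f) * A.det * (A⁻¹.submatrix (e ∘ Sum.inl) (f ∘ Sum.inl)).det =
      (A.submatrix (f ∘ Sum.inr) (e ∘ Sum.inr)).det := by
  set M := A.submatrix f e
  have hM : M.det = Perm.sign (e.symm.trans f) * A.det := by
    rw [← det_permute, ← det_submatrix_equiv_self e]
    congr 1
    ext i j
    simp [M]
  have hMunit : IsUnit M.det := by
    rw [hM]
    exact ((Units.isUnit _).map (Int.castRingHom R)).mul hA
  have hblock := det_mul_det_toBlocks₁₁_inv M hMunit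
  rw [hM, inv_submatrix_equiv A f e] at hblock
  exact hblock

end Matrix

theorem Equiv.range_comp_inr {α β γ : Type*} (e : α ⊕ β ≃ γ) :
    Set.range (e ∘ Sum.inr) = (Set.range (e ∘ Sum.inl))ᶜ := by
  rw [Set.range_comp, Set.range_comp, ← Set.image_compl_eq e.bijective, Set.compl_range_inl]

def IsShuffle {α β γ : Type*} [Preorder α] [Preorder β] [Preorder γ] (e : α ⊕ β ≃ γ) : Prop :=
  StrictMono (e ∘ Sum.inl) ∧ StrictMono (e ∘ Sum.inr)

theorem IsShuffle.ext {α β γ : Type*} [Preorder α] [LinearOrder β] [WellFoundedLT β]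
    [Preorder γ] {e f : α ⊕ β ≃ γ} (he : IsShuffle e) (hf : IsShuffle f)
    (h : e ∘ Sum.inl = f ∘ Sum.inl) : e = f := by
  have hinr : e ∘ Sum.inr = f ∘ Sum.inr :=
    (he.2.range_inj hf.2).1 (by rw [e.range_comp_inr, f.range_comp_inr, h])
  refine Equiv.ext fun x => ?_
  rcases x with i | i
  · exact congrFun h i
  · exact congrFun hinr i

section Shuffle

variable {l k n : ℕ}

theorem exists_isShuffle_comp_inl_eq {r : Fin l → Fin n} (hr : StrictMono r) :
    ∃ e : Fin l ⊕ Fin (n - l) ≃ Fin n, IsShuffle e ∧ e ∘ Sum.inl = r := by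
  classical
  set s := Finset.univ.image r
  have hs : s.card = l := by simp [s, Finset.card_image_of_injective _ hr.injective]
  have hsc : sᶜ.card = n - l := by simp [Finset.card_compl, hs]
  refine ⟨finSumEquivOfFinset hs hsc, ⟨(s.orderEmbOfFin hs).strictMono,
    (sᶜ.orderEmbOfFin hsc).strictMono⟩, ?_⟩
  exact (Finset.orderEmbOfFin_unique hs (by simp [s]) hr).symm

theorem isShuffle_finSumFinEquiv (h : l + k = n) :
    IsShuffle (finSumFinEquiv.trans (finCongr h)) :=
  ⟨fun _ _ hij => by simpa using Fin.strictMono_castAdd k hij, fun _ _ hij => by simpa using hij⟩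

theorem Fin.swap_apply_lt_swap_apply {a b x y : Fin n} (hab : (b : ℕ) = a + 1) (hxy : x < y)
    (h : ¬(x = a ∧ y = b)) : swap a b x < swap a b y := by
  simp only [swap_apply_def]
  split_ifs <;> grind

theorem IsShuffle.trans_swap {e : Fin l ⊕ Fin k ≃ Fin n} (he : IsShuffle e) {i : Fin l}
    {j : Fin k} (hij : (e (Sum.inl i) : ℕ) = e (Sum.inr j) + 1) :
    IsShuffle (e.trans (swap (e (Sum.inr j)) (e (Sum.inl i)))) := by
  refine ⟨fun x y hxy => Fin.swap_apply_lt_swap_apply hij (he.1 hxy) ?_,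
    fun x y hxy => Fin.swap_apply_lt_swap_apply hij (he.2 hxy) ?_⟩
  · rintro ⟨hx, -⟩
    exact Sum.inl_ne_inr (e.injective hx)
  · rintro ⟨-, hy⟩
    exact Sum.inr_ne_inl (e.injective hy)

/- At the first `i` with `e (inl i) ≠ i`, the value just below `e (inl i)` is not taken by the
`inl` block. -/
theorem IsShuffle.exists_val_inl_eq_succ {e : Fin l ⊕ Fin k ≃ Fin n} (he : IsShuffle e)
    (hne : ¬∀ i, (e (Sum.inl i) : ℕ) = i) : ∃ i j, (e (Sum.inl i) : ℕ) = e (Sum.inr j) + 1 := by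
  simp only [not_forall] at hne
  obtain ⟨i, hi, hmin⟩ := WellFounded.has_min wellFounded_lt {i | (e (Sum.inl i) : ℕ) ≠ i} hne
  have hbelow : ∀ i' < i, (e (Sum.inl i') : ℕ) = i' := fun i' hi' => by
    by_contra h
    exact hmin i' h hi'
  have hgt : (i : ℕ) < e (Sum.inl i) := by
    by_contra! hle
    have hlt : (e (Sum.inl i) : ℕ) < i := lt_of_le_of_ne hle hi
    have heq := hbelow ⟨_, hlt.trans i.2⟩ hlt
    exact hlt.ne (congrArg Fin.val (he.1.injective (Fin.ext heq)))
  set a : Fin n := ⟨e (Sum.inl i) - 1, by omega⟩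
  obtain ⟨j, hj⟩ : a ∈ Set.range (e ∘ Sum.inr) := by
    rw [e.range_comp_inr]
    rintro ⟨i', hi'⟩
    have hval : (e (Sum.inl i') : ℕ) = e (Sum.inl i) - 1 := congrArg Fin.val hi'
    rcases lt_trichotomy i' i with h | rfl | h
    · have := hbelow i' h
      have : (i' : ℕ) < i := h
      omega
    · omega
    · have : (e (Sum.inl i) : ℕ) < e (Sum.inl i') := he.1 h
      omega
  refine ⟨i, j, ?_⟩
  have : (e (Sum.inr j) : ℕ) = e (Sum.inl i) - 1 := congrArg Fin.val hj
  omega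

theorem sum_val_trans_swap_inl (e : Fin l ⊕ Fin k ≃ Fin n) {i : Fin l} {j : Fin k}
    (hij : (e (Sum.inl i) : ℕ) = e (Sum.inr j) + 1) :
    ∑ i', ((e.trans (swap (e (Sum.inr j)) (e (Sum.inl i)))) (Sum.inl i') : ℕ) + 1 =
      ∑ i', (e (Sum.inl i') : ℕ) := by
  rw [← Finset.add_sum_erase _ _ (Finset.mem_univ i),
    ← Finset.add_sum_erase _ _ (Finset.mem_univ i), trans_apply, swap_apply_right]
  have hrest : ∀ i' ∈ Finset.univ.erase i,
      ((e.trans (swap (e (Sum.inr j)) (e (Sum.inl i)))) (Sum.inl i') : ℕ) = e (Sum.inl i') := by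
    intro i' hi'
    rw [trans_apply, swap_apply_of_ne_of_ne]
    · exact fun h => Sum.inl_ne_inr (e.injective h)
    · exact fun h => Finset.ne_of_mem_erase hi' (Sum.inl_injective (e.injective h))
  rw [Finset.sum_congr rfl hrest]
  omega

theorem IsShuffle.sign_finSumFinEquiv_symm_trans (h : l + k = n) {e : Fin l ⊕ Fin k ≃ Fin n}
    (he : IsShuffle e) :
    Perm.sign ((finSumFinEquiv.trans (finCongr h)).symm.trans e) =
      (-1) ^ (∑ i, (e (Sum.inl i) : ℕ) + ∑ i : Fin l, (i : ℕ)) := by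
  set c := finSumFinEquiv.trans (finCongr h)
  induction hN : ∑ i, (e (Sum.inl i) : ℕ) using Nat.strong_induction_on generalizing e with
  | _ N ih =>
  by_cases hid : ∀ i, (e (Sum.inl i) : ℕ) = i
  · have hec : e = c :=
      he.ext (isShuffle_finSumFinEquiv h) (funext fun i => Fin.ext (by simp [c, hid]))
    rw [hec, symm_trans_self, Perm.sign_refl, ← hN, Finset.sum_congr rfl fun i _ => hid i,
      ← two_mul, pow_mul]
    simp
  · obtain ⟨i, j, hij⟩ := he.exists_val_inl_eq_succ hid
    have hswap : Perm.sign (c.symm.trans (e.trans (swap (e (Sum.inr j)) (e (Sum.inl i))))) =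
        -Perm.sign (c.symm.trans e) := by
      rw [← trans_assoc, Perm.sign_trans, Perm.sign_swap (fun h => Sum.inr_ne_inl (e.injective h)),
        neg_one_mul]
    have hsum := sum_val_trans_swap_inl e hij
    rw [ih _ (by omega) (he.trans_swap hij) rfl] at hswap
    rw [← neg_neg (Perm.sign _), ← hswap, ← hN, ← hsum, add_right_comm, pow_succ]
    simp

theorem IsShuffle.sign_symm_trans {e f : Fin l ⊕ Fin k ≃ Fin n} (he : IsShuffle e)
    (hf : IsShuffle f) :
    Perm.sign (e.symm.trans f) = (-1) ^ (∑ i, (e (Sum.inl i) : ℕ) + ∑ i, (f (Sum.inl i) : ℕ)) := by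
  have h : l + k = n := by simpa using Fintype.card_congr e
  set c := finSumFinEquiv.trans (finCongr h)
  have hsplit : e.symm.trans f = (c.symm.trans e).symm.trans (c.symm.trans f) := by
    ext x
    simp
  rw [hsplit, Perm.sign_trans, Perm.sign_symm, he.sign_finSumFinEquiv_symm_trans h,
    hf.sign_finSumFinEquiv_symm_trans h, ← pow_add, add_add_add_comm, ← two_mul,
    pow_add _ _ (2 * _), pow_mul]
  simp [add_comm]

end Shuffle

theorem Matrix.exists_complementary_minor_eq {R : Type*} [CommRing R] {n l : ℕ}
    (A : Matrix (Fin n) (Fin n) R) (hA : IsUnit A.det) {r c : Fin l → Fin n}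
    (hr : StrictMono r) (hc : StrictMono c) :
    ∃ r' c' : Fin (n - l) → Fin n, StrictMono r' ∧ StrictMono c' ∧
      (-1) ^ (∑ i, (r i : ℕ) + ∑ i, (c i : ℕ)) * A.det * (A⁻¹.submatrix r c).det =
        (A.submatrix c' r').det := by
  obtain ⟨e, he, rfl⟩ := exists_isShuffle_comp_inl_eq hr
  obtain ⟨f, hf, rfl⟩ := exists_isShuffle_comp_inl_eq hc
  refine ⟨e ∘ Sum.inr, f ∘ Sum.inr, he.2, hf.2, ?_⟩
  rw [← A.sign_mul_det_mul_det_inv_submatrix hA e f, he.sign_symm_trans hf]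
  push_cast
  rfl

namespace Fin

variable {m : ℕ}

theorem strictAnti_toLex_succAbove : StrictAnti fun p : Fin (m + 1) => toLex p.succAbove := by
  intro p q hpq
  have hp : (p : ℕ) < m := by omega
  refine ⟨⟨p, hp⟩, fun j hj => ?_, ?_⟩
  · have hj' : (j : ℕ) < p := hj
    show q.succAbove j = p.succAbove j
    rw [succAbove_of_castSucc_lt, succAbove_of_castSucc_lt] <;> grind
  · show q.succAbove ⟨p, hp⟩ < p.succAbove ⟨p, hp⟩
    rw [succAbove_of_castSucc_lt, succAbove_of_le_castSucc] <;> grind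

theorem exists_eq_succAbove_of_strictMono {g : Fin m → Fin (m + 1)} (hg : StrictMono g) :
    ∃ p : Fin (m + 1), g = p.succAbove := by
  obtain ⟨p, hp⟩ : ∃ p, p ∉ Set.range g := by
    by_contra! h
    simpa using Fintype.card_le_of_surjective g h
  have hcard : ({p}ᶜ : Finset (Fin (m + 1))).card = m := by simp [Finset.card_compl]
  refine ⟨p, ?_⟩
  rw [Finset.orderEmbOfFin_unique hcard (fun x => ?_) hg,
    Finset.orderEmbOfFin_unique hcard (fun x => ?_) (strictMono_succAbove p)]
  · simp [succAbove_ne]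
  · simpa using fun h => hp ⟨x, h⟩

theorem exists_strictMono_succAbove_rev {l : ℕ} {g : Fin l → Fin m → Fin (m + 1)}
    (hg : ∀ i, StrictMono (g i)) (hlex : StrictMono fun i => toLex (g i)) :
    ∃ u : Fin l → Fin (m + 1), StrictMono u ∧ ∀ i, g i = (u i.rev).succAbove := by
  choose p hp using fun i => exists_eq_succAbove_of_strictMono (hg i)
  refine ⟨p ∘ rev, fun i j hij => ?_, fun i => by simp [hp]⟩
  have h := hlex (rev_lt_rev.mpr hij)
  simp only [hp] at h
  exact strictAnti_toLex_succAbove.lt_iff_gt.mp h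

end Fin

theorem Matrix.det_submatrix_succAbove_succAbove {R : Type*} [CommRing R] {m : ℕ}
    (A : Matrix (Fin (m + 1)) (Fin (m + 1)) R) (p q : Fin (m + 1)) :
    (A.submatrix p.succAbove q.succAbove).det = (-1) ^ (p + q : ℕ) * A.adjugate q p := by
  rw [adjugate_fin_succ_eq_det_submatrix, ← mul_assoc, ← pow_add, ← two_mul, pow_mul]
  simp

theorem det_compound_pred_submatrix {m l : ℕ} (A : Matrix (Fin (m + 1)) (Fin (m + 1)) ℝ)
    (hA : IsUnit A.det) {r c : Fin l → STuple (m + 1) m} {u v : Fin l → Fin (m + 1)}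
    (hr : ∀ i, (r i).1 = (u i.rev).succAbove) (hc : ∀ i, (c i).1 = (v i.rev).succAbove) :
    ((compound A m).submatrix r c).det =
      A.det ^ l * ((-1) ^ (∑ i, (u i : ℕ) + ∑ i, (v i : ℕ)) * (A⁻¹.submatrix v u).det) := by
  have hadj : A.adjugate = A.det • A⁻¹ := by
    rw [Matrix.inv_def, smul_smul, Ring.mul_inverse_cancel _ hA, one_smul]
  have hentries : ((compound A m).submatrix r c).submatrix Fin.revPerm Fin.revPerm =
      of fun i j => (-1) ^ (u i : ℕ) *
        of (fun i j => (-1) ^ (v j : ℕ) * (A.det • (A⁻¹.submatrix v u)ᵀ) i j) i j := by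
    ext i j
    simp [compound, hr, hc, det_submatrix_succAbove_succAbove, hadj, pow_add]
    ring
  rw [← det_submatrix_equiv_self Fin.revPerm, hentries, det_mul_column, det_mul_row, det_smul,
    det_transpose, Finset.prod_pow_eq_pow_sum, Finset.prod_pow_eq_pow_sum, Fintype.card_fin,
    pow_add]
  ring

theorem isTP_of_subsingleton {α β : Type} [LinearOrder α] [LinearOrder β] [Subsingleton α]
    (A : Matrix α β ℝ) (hA : ∀ i j, 0 < A i j) : IsTP A := by
  intro l r c hr _
  rcases l with _ | _ | l
  · simp
  · simpa using hA (r 0) (c 0)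
  · exact absurd (Subsingleton.elim _ _) (hr.injective.ne Fin.zero_ne_one)

/-- If `A` is an `n×n` totally positive matrix, then its `(n-1)`st compound
matrix is totally positive. -/
theorem compound_pred_totallyPos {n : ℕ} (A : Matrix (Fin n) (Fin n) ℝ)
    (hA : IsTP A) : IsTP (compound A (n - 1)) := by
  cases n with
  | zero => exact isTP_of_subsingleton _ fun _ _ => by simp [compound]
  | succ m =>
  intro l r c hr hc
  have hdet : 0 < A.det := by simpa using hA (m + 1) id id strictMono_id strictMono_id
  obtain ⟨u, hu, hru⟩ := Fin.exists_strictMono_succAbove_rev (fun i => (r i).2) hr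
  obtain ⟨v, hv, hcv⟩ := Fin.exists_strictMono_succAbove_rev (fun i => (c i).2) hc
  obtain ⟨v', u', hv', hu', hjacobi⟩ := A.exists_complementary_minor_eq hdet.ne'.isUnit hv hu
  have hminor :
      ((compound A m).submatrix r c).det * A.det = A.det ^ l * (A.submatrix u' v').det := by
    rw [det_compound_pred_submatrix A hdet.ne'.isUnit hru hcv, ← hjacobi]
    ring
  have hpos : 0 < A.det ^ l * (A.submatrix u' v').det := by
    have := hA _ u' v' hu' hv'
    positivity
  exact pos_of_mul_pos_left (hminor ▸ hpos) hdet.le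
end

section
/- If A is an n-by-n totally positive matrix and S = diag(1,-1,1,...,(-1)^{n-1}), then S A^{-1} S is totally positive. -/
open Matrix

open Matrix

/-!
By Jacobi's complementary minor formula, for `A * B = 1` and `l`-subsets `I`, `J` of rows and
columns, `det A * det B[I, J] = (-1) ^ (∑ I + ∑ J) * det A[Jᶜ, Iᶜ]`. Conjugating `B = A⁻¹` by
`S = diag((-1) ^ i)` multiplies `det B[I, J]` by exactly this sign, so every minor of `S A⁻¹ S` is
a complementary minor of `A` divided by `det A`, and both are positive.

The formula comes from writing `A` in block form after moving the rows `Jᶜ` and columns `Iᶜ` to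
the end. The sign of the permutation that does this changes by `-1` whenever one element of `I`
is replaced by its left neighbour, which lowers `∑ I` by one.
-/

open Finset Equiv

section BlockInverse

variable {R m p : Type*} [CommRing R] [Fintype m] [Fintype p] [DecidableEq m] [DecidableEq p]

theorem Matrix.det_mul_det_toBlocks₁₁_of_mul_eq_one {X Y : Matrix (m ⊕ p) (m ⊕ p) R}
    (h : X * Y = 1) : X.det * Y.toBlocks₁₁.det = X.toBlocks₂₂.det := by
  have hXY : fromBlocks X.toBlocks₁₁ X.toBlocks₁₂ X.toBlocks₂₁ X.toBlocks₂₂ *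
      fromBlocks Y.toBlocks₁₁ Y.toBlocks₁₂ Y.toBlocks₂₁ Y.toBlocks₂₂ = fromBlocks 1 0 0 1 := by
    rw [fromBlocks_toBlocks, fromBlocks_toBlocks, h, fromBlocks_one]
  rw [fromBlocks_multiply, fromBlocks_inj] at hXY
  have hfactor : X * fromBlocks Y.toBlocks₁₁ 0 Y.toBlocks₂₁ 1 =
      fromBlocks 1 X.toBlocks₁₂ 0 X.toBlocks₂₂ := by
    conv_lhs => rw [← fromBlocks_toBlocks X]
    rw [fromBlocks_multiply, hXY.1, hXY.2.2.1]
    simp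
  simpa [det_fromBlocks_zero₁₂, det_fromBlocks_zero₂₁] using congrArg det hfactor

end BlockInverse

theorem Matrix.det_submatrix_diagonal_mul_mul_diagonal {R ι κ : Type*} [CommRing R] [Fintype ι]
    [DecidableEq ι] [Fintype κ] [DecidableEq κ] (d : ι → R) (M : Matrix ι ι R) (r c : κ → ι) :
    ((diagonal d * M * diagonal d).submatrix r c).det =
      (∏ i, d (r i)) * (∏ j, d (c j)) * (M.submatrix r c).det := by
  have hentries : (diagonal d * M * diagonal d).submatrix r c =
      of fun i j => d (r i) * (of fun i j => d (c j) * M.submatrix r c i j) i j := by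
    ext i j
    simp only [diagonal_mul, mul_diagonal, submatrix_apply, of_apply]
    ring
  rw [hentries, det_mul_column, det_mul_row, mul_assoc]

theorem Equiv.Perm.sign_symm_trans_comm {α β : Type*} [DecidableEq β] [Fintype β] (e f : α ≃ β) :
    Perm.sign (e.symm.trans f) = Perm.sign (f.symm.trans e) := by
  rw [← Perm.sign_symm]
  rfl

section OrderEmbOfFin

variable {α : Type*} [LinearOrder α] {l : ℕ}

theorem Finset.exists_orderEmbOfFin_eq {r : Fin l → α} (hr : StrictMono r) :
    ∃ (s : Finset α) (hs : #s = l), ⇑(s.orderEmbOfFin hs) = r := by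
  have hs : #(univ.map ⟨r, hr.injective⟩) = l := by simp
  exact ⟨_, hs, (orderEmbOfFin_unique hs (fun i => mem_map_of_mem _ (mem_univ i)) hr).symm⟩

theorem Finset.sum_orderEmbOfFin {M : Type*} [AddCommMonoid M] (s : Finset α) (hs : #s = l)
    (f : α → M) : ∑ i, f (s.orderEmbOfFin hs i) = ∑ a ∈ s, f a :=
  calc ∑ i, f (s.orderEmbOfFin hs i) = ∑ a ∈ univ.map (s.orderEmbOfFin hs).toEmbedding, f a :=
        (sum_map _ _ _).symm
    _ = ∑ a ∈ s, f a := by rw [map_orderEmbOfFin_univ]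

end OrderEmbOfFin

section AdjacentSwap

variable {n : ℕ}

theorem Fin.strictMonoOn_swap_of_covBy {x y : Fin n} (hxy : x ⋖ y) {t : Set (Fin n)}
    (ht : x ∉ t ∨ y ∉ t) : StrictMonoOn (swap x y) t := by
  rw [Fin.covBy_iff, Nat.covBy_iff_add_one_eq] at hxy
  intro a ha b hb hab
  have hne : (a : ℕ) ≠ x ∧ (b : ℕ) ≠ x ∨ (a : ℕ) ≠ y ∧ (b : ℕ) ≠ y := by
    rcases ht with h | h
    · exact .inl ⟨fun e => h (Fin.ext e ▸ ha), fun e => h (Fin.ext e ▸ hb)⟩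
    · exact .inr ⟨fun e => h (Fin.ext e ▸ ha), fun e => h (Fin.ext e ▸ hb)⟩
  rw [Fin.lt_def] at hab ⊢
  simp only [swap_apply_def]
  split_ifs <;> simp only [Fin.ext_iff] at * <;> omega

theorem Fin.exists_covBy_notMem_mem {s : Finset (Fin n)} {a b : Fin n} (hab : a < b) (ha : a ∉ s)
    (hb : b ∈ s) : ∃ x y, x ⋖ y ∧ x ∉ s ∧ y ∈ s := by
  have hne : (s.filter (a < ·)).Nonempty := ⟨b, mem_filter.2 ⟨hb, hab⟩⟩
  obtain ⟨hys, hay⟩ := mem_filter.1 (min'_mem _ hne)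
  set y := (s.filter (a < ·)).min' hne
  rw [Fin.lt_def] at hay
  let x : Fin n := ⟨y - 1, by omega⟩
  refine ⟨x, y, ?_, fun hx => ?_, hys⟩
  · rw [Fin.covBy_iff, Nat.covBy_iff_add_one_eq]
    exact Nat.sub_add_cancel (by omega)
  · rcases eq_or_lt_of_le (show (a : ℕ) ≤ x by dsimp [x]; omega) with h | h
    · exact ha (Fin.ext h ▸ hx)
    · have hyx := min'_le (s.filter (a < ·)) x (mem_filter.2 ⟨hx, Fin.lt_def.2 h⟩)
      rw [Fin.le_def] at hyx
      dsimp [x] at hyx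
      omega

theorem Fin.exists_covBy_notMem_mem_of_ne {s t : Finset (Fin n)} (hcard : #s = #t) (hst : s ≠ t) :
    (∃ x y, x ⋖ y ∧ x ∉ s ∧ y ∈ s) ∨ ∃ x y, x ⋖ y ∧ x ∉ t ∧ y ∈ t := by
  have hsdiff {u v : Finset (Fin n)} (huv : #u = #v) (hne : u ≠ v) : ∃ b ∈ u, b ∉ v :=
    not_subset.1 fun h => hne (eq_of_subset_of_card_le h huv.ge)
  obtain ⟨b, hbs, hbt⟩ := hsdiff hcard hst
  obtain ⟨a, hat, has⟩ := hsdiff hcard.symm (Ne.symm hst)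
  rcases lt_or_gt_of_ne (ne_of_mem_of_not_mem hat hbt) with hab | hba
  · exact .inl (exists_covBy_notMem_mem hab has hbs)
  · exact .inr (exists_covBy_notMem_mem hba hbt hat)

theorem Finset.sum_val_map_swap {s : Finset (Fin n)} {x y : Fin n} (hxy : x ⋖ y) (hx : x ∉ s)
    (hy : y ∈ s) : ∑ a ∈ s.map (swap x y).toEmbedding, (a : ℕ) + 1 = ∑ a ∈ s, (a : ℕ) := by
  rw [Fin.covBy_iff, Nat.covBy_iff_add_one_eq] at hxy
  rw [sum_map, ← add_sum_erase _ _ hy, ← add_sum_erase _ _ hy, coe_toEmbedding, swap_apply_right,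
    ← hxy, sum_congr rfl fun a ha => ?_]
  · ring
  · rw [swap_apply_of_ne_of_ne (ne_of_mem_of_not_mem (mem_of_mem_erase ha) hx)
      (ne_of_mem_erase ha)]

end AdjacentSwap

section FinSumComplEquiv

variable {n l : ℕ}

theorem Finset.card_compl_of_card_eq {s : Finset (Fin n)} (hs : #s = l) : #sᶜ = n - l := by
  rw [card_compl, Fintype.card_fin, hs]

noncomputable def finSumComplEquiv {s : Finset (Fin n)} (hs : #s = l) :
    Fin l ⊕ Fin (n - l) ≃ Fin n :=
  finSumEquivOfFinset hs (card_compl_of_card_eq hs)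

theorem finSumComplEquiv_map_swap {s : Finset (Fin n)} (hs : #s = l) {x y : Fin n} (hxy : x ⋖ y)
    (hx : x ∉ s) (hy : y ∈ s) :
    finSumComplEquiv ((card_map _).trans hs : #(s.map (swap x y).toEmbedding) = l) =
      (finSumComplEquiv hs).trans (swap x y) := by
  refine Equiv.ext fun k => ?_
  rcases k with i | j <;> simp only [finSumComplEquiv, finSumEquivOfFinset_inl,
    finSumEquivOfFinset_inr, Equiv.trans_apply]
  · refine (congrFun (orderEmbOfFin_unique (f := swap x y ∘ s.orderEmbOfFin hs) _
      (fun i => mem_map_of_mem _ (orderEmbOfFin_mem _ _ _)) fun i i' hii' => ?_) i).symm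
    exact Fin.strictMonoOn_swap_of_covBy hxy (.inl hx) (orderEmbOfFin_mem s hs i)
      (orderEmbOfFin_mem s hs i') ((orderEmbOfFin s hs).strictMono hii')
  · have hsc := card_compl_of_card_eq hs
    refine (congrFun (orderEmbOfFin_unique (f := swap x y ∘ sᶜ.orderEmbOfFin hsc) _
      (fun j => ?_) fun j j' hjj' => ?_) j).symm
    · simpa [mem_map_equiv] using mem_compl.1 (orderEmbOfFin_mem sᶜ hsc j)
    · exact Fin.strictMonoOn_swap_of_covBy hxy (.inr fun h => mem_compl.1 h hy)
        (orderEmbOfFin_mem sᶜ hsc j) (orderEmbOfFin_mem sᶜ hsc j')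
        ((orderEmbOfFin sᶜ hsc).strictMono hjj')

theorem sign_symm_trans_finSumComplEquiv_map_swap {s t : Finset (Fin n)} (hs : #s = l)
    (ht : #t = l) {x y : Fin n} (hxy : x ⋖ y) (hx : x ∉ s) (hy : y ∈ s) :
    Perm.sign ((finSumComplEquiv ht).symm.trans
      (finSumComplEquiv ((card_map _).trans hs : #(s.map (swap x y).toEmbedding) = l))) =
      -Perm.sign ((finSumComplEquiv ht).symm.trans (finSumComplEquiv hs)) := by
  rw [finSumComplEquiv_map_swap hs hxy hx hy, ← Equiv.trans_assoc, ← Perm.mul_def, Perm.sign_mul,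
    Perm.sign_swap hxy.ne, neg_one_mul]

theorem sign_symm_trans_finSumComplEquiv {s t : Finset (Fin n)} (hs : #s = l) (ht : #t = l) :
    Perm.sign ((finSumComplEquiv ht).symm.trans (finSumComplEquiv hs)) =
      (-1) ^ (∑ a ∈ s, (a : ℕ) + ∑ a ∈ t, (a : ℕ)) := by
  induction hN : ∑ a ∈ s, (a : ℕ) + ∑ a ∈ t, (a : ℕ) using Nat.strong_induction_on
    generalizing s t with
  | _ N ih =>
  rcases eq_or_ne s t with rfl | hst
  · rw [← hN, ← two_mul, pow_mul]
    simp
  rcases Fin.exists_covBy_notMem_mem_of_ne (hs.trans ht.symm) hst with ⟨x, y, hxy, hx, hy⟩ |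
    ⟨x, y, hxy, hx, hy⟩
  · have hsum := sum_val_map_swap hxy hx hy
    rw [← neg_neg (Perm.sign _), ← sign_symm_trans_finSumComplEquiv_map_swap hs ht hxy hx hy,
      ih _ (by omega) _ _ rfl, ← hN, ← hsum, add_right_comm, pow_succ, mul_neg_one]
  · have hsum := sum_val_map_swap hxy hx hy
    rw [Perm.sign_symm_trans_comm, ← neg_neg (Perm.sign _),
      ← sign_symm_trans_finSumComplEquiv_map_swap ht hs hxy hx hy, Perm.sign_symm_trans_comm,
      ih _ (by omega) _ _ rfl, ← hN, ← hsum, ← add_assoc, pow_succ, mul_neg_one]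

/-- Jacobi's complementary minor formula. -/
theorem Matrix.det_mul_det_submatrix_orderEmbOfFin {R : Type*} [CommRing R]
    {A B : Matrix (Fin n) (Fin n) R} (hAB : A * B = 1) {s t : Finset (Fin n)} (hs : #s = l)
    (ht : #t = l) :
    (-1) ^ (∑ a ∈ s, (a : ℕ) + ∑ a ∈ t, (a : ℕ)) * A.det *
        (B.submatrix (s.orderEmbOfFin hs) (t.orderEmbOfFin ht)).det =
      (A.submatrix (tᶜ.orderEmbOfFin (card_compl_of_card_eq ht))
        (sᶜ.orderEmbOfFin (card_compl_of_card_eq hs))).det := by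
  have hXY : A.submatrix (finSumComplEquiv ht) (finSumComplEquiv hs) *
      B.submatrix (finSumComplEquiv hs) (finSumComplEquiv ht) = 1 := by
    rw [submatrix_mul_equiv, hAB, submatrix_one_equiv]
  have hX : (A.submatrix (finSumComplEquiv ht) (finSumComplEquiv hs)).det =
      (-1) ^ (∑ a ∈ s, (a : ℕ) + ∑ a ∈ t, (a : ℕ)) * A.det := by
    have hperm : A.submatrix (finSumComplEquiv ht) (finSumComplEquiv hs) =
        (A.submatrix ((finSumComplEquiv hs).symm.trans (finSumComplEquiv ht)) id).submatrix
          (finSumComplEquiv hs) (finSumComplEquiv hs) := by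
      ext; simp
    rw [hperm, det_submatrix_equiv_self, det_permute, sign_symm_trans_finSumComplEquiv ht hs,
      add_comm, Units.val_pow_eq_pow_val, Units.val_neg, Units.val_one, Int.cast_pow, Int.cast_neg,
      Int.cast_one]
  rw [← hX]
  exact det_mul_det_toBlocks₁₁_of_mul_eq_one hXY

end FinSumComplEquiv

/-- If `A` is totally positive and `S = diag(1, -1, …, (-1)^(n-1))`, then
`S A⁻¹ S` is totally positive. -/
theorem SAinvS_totallyPos {n : ℕ} (A : Matrix (Fin n) (Fin n) ℝ) (hA : IsTP A) :
    IsTP ((Matrix.diagonal fun i : Fin n => (-1 : ℝ) ^ (i : ℕ)) * A⁻¹ *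
      (Matrix.diagonal fun i : Fin n => (-1 : ℝ) ^ (i : ℕ))) := by
  intro l r c hr hc
  have hdet : 0 < A.det := by simpa using hA n id id strictMono_id strictMono_id
  obtain ⟨s, hs, rfl⟩ := exists_orderEmbOfFin_eq hr
  obtain ⟨t, ht, rfl⟩ := exists_orderEmbOfFin_eq hc
  have hcompl := hA _ _ _ (orderEmbOfFin _ (card_compl_of_card_eq ht)).strictMono
    (orderEmbOfFin _ (card_compl_of_card_eq hs)).strictMono
  rw [← det_mul_det_submatrix_orderEmbOfFin (A.mul_nonsing_inv (isUnit_iff_ne_zero.2 hdet.ne'))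
    hs ht, mul_right_comm, pow_add] at hcompl
  rw [det_submatrix_diagonal_mul_mul_diagonal, prod_pow_eq_pow_sum, prod_pow_eq_pow_sum,
    sum_orderEmbOfFin, sum_orderEmbOfFin]
  exact pos_of_mul_pos_left hcompl hdet.le
end

section
/- Theorem A (case n=4, k=2): If A is a 4-by-4 totally positive matrix, then the second compound C_2(A) is not TP_3; in fact, among the 3-by-3 minors of the leading principal 4-by-4 submatrix of C_2(A), at least one is negative. Specifically, with S the 4-by-4 matrix with entries s_{pq} = det A[S_p, S_q] for S_1={1,2}, S_2={1,3}, S_3={1,4}, S_4={2,3}, the minors det S[{1,2,3},{1,3,4}] and det S[{1,2,4},{1,3,4}] have opposite signs. -/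
open Matrix

open Matrix

/-- The 2-subsets `{1,2}, {1,3}, {1,4}, {2,3}` of `{1,2,3,4}` (0-indexed). -/
def pairSets : Fin 4 → (Fin 2 → Fin 4) := ![![0, 1], ![0, 2], ![0, 3], ![1, 2]]

/-- The leading principal `4×4` submatrix `S` of `C₂(A)`, with entries
`s_{pq} = det A[S_p, S_q]`. -/
noncomputable def Smat (A : Matrix (Fin 4) (Fin 4) ℝ) : Matrix (Fin 4) (Fin 4) ℝ :=
  fun p q => (A.submatrix (pairSets p) (pairSets q)).det

/-! Both minors of `S` factor into minors of `A` (identities of Sylvester type):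
`det S[{1,2,3},{1,3,4}] = -a₁₁ a₁₂ det A` and
`det S[{1,2,4},{1,3,4}] = det A[{1,2,3},{1,2,3}] · det A[{1,2,3},{1,2,4}]`.
Total positivity of `A` makes the first negative and the second positive. Since
`S_1 < S_2 < S_3 < S_4` are the first four pairs in lexicographic order, the first is also a
`3×3` minor of `C₂(A)` with increasing row and column indices, so `C₂(A)` is not `TP₃`. -/

lemma IsTP.apply_pos {α β : Type} [LinearOrder α] [LinearOrder β] {A : Matrix α β ℝ}
    (hA : IsTP A) (i : α) (j : β) : 0 < A i j := by
  have h := hA 1 ![i] ![j] (Subsingleton.strictMono _) (Subsingleton.strictMono _)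
  rwa [det_fin_one] at h

lemma IsTP.det_pos {n : ℕ} {A : Matrix (Fin n) (Fin n) ℝ} (hA : IsTP A) : 0 < A.det := by
  simpa using hA n id id strictMono_id strictMono_id

lemma Smat_apply (A : Matrix (Fin 4) (Fin 4) ℝ) (p q : Fin 4) :
    Smat A p q = A (pairSets p 0) (pairSets q 0) * A (pairSets p 1) (pairSets q 1) -
      A (pairSets p 0) (pairSets q 1) * A (pairSets p 1) (pairSets q 0) :=
  det_fin_two _

lemma det_Smat_submatrix_012_023 (A : Matrix (Fin 4) (Fin 4) ℝ) :
    ((Smat A).submatrix ![0, 1, 2] ![0, 2, 3]).det = -(A 0 0 * A 0 1 * A.det) := by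
  rw [det_fin_three, det_succ_row_zero]
  simp [Smat_apply, pairSets, Fin.sum_univ_succ, det_fin_three, Fin.succAbove]
  ring

lemma det_Smat_submatrix_013_023 (A : Matrix (Fin 4) (Fin 4) ℝ) :
    ((Smat A).submatrix ![0, 1, 3] ![0, 2, 3]).det =
      (A.submatrix ![0, 1, 2] ![0, 1, 2]).det * (A.submatrix ![0, 1, 2] ![0, 1, 3]).det := by
  simp only [det_fin_three]
  simp only [submatrix_apply, Smat_apply, pairSets, Fin.isValue, cons_val', cons_val_zero,
    cons_val_one, cons_val, cons_val_fin_one]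
  ring

def pairTuple (p : Fin 4) : STuple 4 2 := ⟨pairSets p, by fin_cases p <;> decide⟩

/- Stated through `toLex`: a bare `<` on `STuple 4 2` elaborates to the pointwise order of the
subtype, not to the lexicographic order that `IsTPk (compound A 2)` uses. -/
lemma pairSets_lex_strictMono : StrictMono fun p => toLex (pairSets p) := by
  refine Fin.strictMono_iff_lt_succ.2 fun p => ?_
  fin_cases p
  · exact ⟨1, by simp [Fin.lt_one_iff, pairSets], by decide⟩
  · exact ⟨1, by simp [Fin.lt_one_iff, pairSets], by decide⟩
  · exact ⟨0, by simp, by decide⟩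

lemma compound_two_submatrix_pairTuple (A : Matrix (Fin 4) (Fin 4) ℝ) :
    (compound A 2).submatrix pairTuple pairTuple = Smat A :=
  rfl

/-- **Theorem A (case n = 4, k = 2).** If `A` is a `4×4` totally positive matrix
then `C₂(A)` is not `TP₃`; in fact the minors `det S[{1,2,3},{1,3,4}]` and
`det S[{1,2,4},{1,3,4}]` have opposite signs. -/
theorem second_compound_not_TP3 (A : Matrix (Fin 4) (Fin 4) ℝ) (hA : IsTP A) :
    ¬ IsTPk (compound A 2) 3 ∧
    ((Smat A).submatrix (![0, 1, 2] : Fin 3 → Fin 4) (![0, 2, 3] : Fin 3 → Fin 4)).det *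
      ((Smat A).submatrix (![0, 1, 3] : Fin 3 → Fin 4) (![0, 2, 3] : Fin 3 → Fin 4)).det
      < 0 := by
  have hneg : ((Smat A).submatrix ![0, 1, 2] ![0, 2, 3]).det < 0 := by
    rw [det_Smat_submatrix_012_023]
    exact neg_neg_of_pos (mul_pos (mul_pos (hA.apply_pos 0 0) (hA.apply_pos 0 1)) hA.det_pos)
  have hpos : 0 < ((Smat A).submatrix ![0, 1, 3] ![0, 2, 3]).det := by
    rw [det_Smat_submatrix_013_023]
    exact mul_pos (hA 3 _ _ (by decide) (by decide)) (hA 3 _ _ (by decide) (by decide))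
  refine ⟨fun hTP3 => ?_, mul_neg_of_neg_of_pos hneg hpos⟩
  have hminor := hTP3 3 le_rfl (pairTuple ∘ ![0, 1, 2]) (pairTuple ∘ ![0, 2, 3])
    (pairSets_lex_strictMono.comp (by decide : StrictMono (![0, 1, 2] : Fin 3 → Fin 4)))
    (pairSets_lex_strictMono.comp (by decide : StrictMono (![0, 2, 3] : Fin 3 → Fin 4)))
  rw [← submatrix_submatrix, compound_two_submatrix_pairTuple] at hminor
  exact hneg.not_gt hminor
end

section
/- If A is an n-by-n TP_{k+2} matrix, then every 2-by-2 contiguous minor of the kth Dodgson condensation matrix D_k(A) factors as det D_k(A)[{i,i+1},{j,j+1}] = det A[{i,...,i+k+1},{j,...,j+k+1}] · det A[{i+1,...,i+k},{j+1,...,j+k}], and consequently is positive. -/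
/-!
Dodgson condensation: for a square matrix `M` of order `m + 2`, the `2 × 2` determinant of its
four corner minors of order `m + 1` equals `det M` times its interior minor. This is the case
`|κ| = 2` of Jacobi's identity for complementary minors of the adjugate, which follows by taking
determinants in `N * fromBlocks 1 P 0 Q = fromBlocks N₁₁ 0 N₂₁ (det N • 1)`, where `P`, `Q` are
the `κ`-columns of `adj N`. Applied to the contiguous block `A[{i,…,i+k+1},{j,…,j+k+1}]`, the
corner minors are the entries of `D_k(A)` in rows `i, i+1` and columns `j, j+1`, and positivity
comes from `TP_{k+2}`.
-/

open Matrix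

open Matrix

theorem Matrix.det_mul_det_toBlocks₂₂_adjugate {ι κ R : Type*} [Fintype ι] [Fintype κ]
    [DecidableEq ι] [DecidableEq κ] [CommRing R] (N : Matrix (ι ⊕ κ) (ι ⊕ κ) R) :
    N.det * N.adjugate.toBlocks₂₂.det = N.det ^ Fintype.card κ * N.toBlocks₁₁.det := by
  set P := N.adjugate.toBlocks₁₂
  set Q := N.adjugate.toBlocks₂₂
  have hprod : fromBlocks N.toBlocks₁₁ N.toBlocks₁₂ N.toBlocks₂₁ N.toBlocks₂₂ *
      fromBlocks N.adjugate.toBlocks₁₁ P N.adjugate.toBlocks₂₁ Q =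
        fromBlocks (N.det • 1) 0 0 (N.det • 1) := by
    rw [fromBlocks_toBlocks, fromBlocks_toBlocks, mul_adjugate, ← fromBlocks_one]
    simp only [fromBlocks_smul, smul_zero]
  rw [fromBlocks_multiply, fromBlocks_inj] at hprod
  obtain ⟨-, h₁₂, -, h₂₂⟩ := hprod
  have hmul : N * fromBlocks 1 P 0 Q = fromBlocks N.toBlocks₁₁ 0 N.toBlocks₂₁ (N.det • 1) := by
    conv_lhs => rw [← fromBlocks_toBlocks N, fromBlocks_multiply]
    simp only [Matrix.mul_one, Matrix.mul_zero, add_zero, h₁₂, h₂₂]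
  have hdet := congrArg det hmul
  rw [det_mul, det_fromBlocks_zero₂₁, det_fromBlocks_zero₁₂, det_one, one_mul, det_smul,
    det_one, mul_one] at hdet
  rw [hdet, mul_comm]

def finSumEnds (m : ℕ) : Fin m ⊕ Fin 2 ≃ Fin (m + 2) :=
  finSumFinEquiv.trans (finRotate (m + 2))

@[simp]
lemma finSumEnds_inl (m : ℕ) (p : Fin m) : finSumEnds m (Sum.inl p) = p.castSucc.succ := by
  ext; simp [finSumEnds, Fin.val_add]

@[simp]
lemma finSumEnds_inr_zero (m : ℕ) : finSumEnds m (Sum.inr 0) = Fin.last (m + 1) := by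
  ext; simp [finSumEnds, Fin.val_add]

@[simp]
lemma finSumEnds_inr_one (m : ℕ) : finSumEnds m (Sum.inr 1) = 0 := by
  ext; simp [finSumEnds, Fin.val_add]

lemma Matrix.toBlocks₁₁_submatrix_finSumEnds {α : Type*} {m : ℕ}
    (M : Matrix (Fin (m + 2)) (Fin (m + 2)) α) :
    (M.submatrix (finSumEnds m) (finSumEnds m)).toBlocks₁₁ =
      M.submatrix (fun p : Fin m => p.castSucc.succ) (fun p : Fin m => p.castSucc.succ) := by
  ext; simp [toBlocks₁₁]

section DesnanotJacobi

variable {R : Type*} [CommRing R] {m : ℕ} (M : Matrix (Fin (m + 2)) (Fin (m + 2)) R)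

lemma Matrix.det_toBlocks₂₂_adjugate_submatrix_finSumEnds :
    ((adjugate M).submatrix (finSumEnds m) (finSumEnds m)).toBlocks₂₂.det =
      det (M.submatrix Fin.castSucc Fin.castSucc) * det (M.submatrix Fin.succ Fin.succ)
        - det (M.submatrix Fin.castSucc Fin.succ) * det (M.submatrix Fin.succ Fin.castSucc) := by
  have hsign : (-1 : R) ^ (m + 1) * (-1) ^ (m + 1) = 1 := by
    rw [← mul_pow, neg_mul_neg, one_mul, one_pow]
  simp only [det_fin_two, toBlocks₂₂, of_apply, submatrix_apply, finSumEnds_inr_zero,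
    finSumEnds_inr_one, adjugate_fin_succ_eq_det_submatrix, Fin.val_last, Fin.val_zero,
    Fin.succAbove_last, Fin.succAbove_zero, add_zero, zero_add]
  linear_combination (det (M.submatrix Fin.castSucc Fin.castSucc) *
    det (M.submatrix Fin.succ Fin.succ) - det (M.submatrix Fin.castSucc Fin.succ) *
      det (M.submatrix Fin.succ Fin.castSucc)) * hsign

theorem Matrix.desnanot_jacobi_s10 [IsDomain R] (hM : M.det ≠ 0) :
    det (M.submatrix Fin.castSucc Fin.castSucc) * det (M.submatrix Fin.succ Fin.succ)
      - det (M.submatrix Fin.castSucc Fin.succ) * det (M.submatrix Fin.succ Fin.castSucc)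
      = M.det * det (M.submatrix (fun p : Fin m => p.castSucc.succ)
          (fun p : Fin m => p.castSucc.succ)) := by
  have h := det_mul_det_toBlocks₂₂_adjugate (M.submatrix (finSumEnds m) (finSumEnds m))
  rw [det_submatrix_equiv_self, adjugate_submatrix_equiv_self, Fintype.card_fin,
    det_toBlocks₂₂_adjugate_submatrix_finSumEnds, toBlocks₁₁_submatrix_finSumEnds, pow_two,
    mul_assoc] at h
  exact mul_left_cancel₀ hM h

end DesnanotJacobi

def contiguousSubmatrix {α : Type*} {n : ℕ} (A : Matrix (Fin n) (Fin n) α) (s i j : ℕ)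
    (hi : i + s ≤ n) (hj : j + s ≤ n) : Matrix (Fin s) (Fin s) α :=
  A.submatrix (fun p : Fin s => ⟨i + p.1, by omega⟩) (fun q : Fin s => ⟨j + q.1, by omega⟩)

lemma contiguousSubmatrix_submatrix {α : Type*} {n s t i j i' j' : ℕ}
    (A : Matrix (Fin n) (Fin n) α) (hi : i + s ≤ n) (hj : j + s ≤ n) (hi' : i' + t ≤ n)
    (hj' : j' + t ≤ n) (f g : Fin t → Fin s) (hf : ∀ p, i + (f p : ℕ) = i' + p)
    (hg : ∀ q, j + (g q : ℕ) = j' + q) :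
    (contiguousSubmatrix A s i j hi hj).submatrix f g =
      contiguousSubmatrix A t i' j' hi' hj' := by
  ext p q
  simp only [contiguousSubmatrix, submatrix_apply, hf, hg]

theorem cminor_desnanot_jacobi {n m i j : ℕ} (A : Matrix (Fin n) (Fin n) ℝ)
    (hi : i + (m + 2) ≤ n) (hj : j + (m + 2) ≤ n) (hA : cminor A (m + 2) i j hi hj ≠ 0) :
    cminor A (m + 1) i j (by omega) (by omega) *
        cminor A (m + 1) (i + 1) (j + 1) (by omega) (by omega)
      - cminor A (m + 1) i (j + 1) (by omega) (by omega) *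
        cminor A (m + 1) (i + 1) j (by omega) (by omega)
      = cminor A (m + 2) i j hi hj * cminor A m (i + 1) (j + 1) (by omega) (by omega) := by
  have hsucc (a : ℕ) (p : Fin (m + 1)) : a + ((Fin.succ p : Fin (m + 2)) : ℕ) = a + 1 + p := by
    simp only [Fin.val_succ]; omega
  have hinterior (a : ℕ) (p : Fin m) : a + (p.castSucc.succ : ℕ) = a + 1 + p := by
    simp only [Fin.val_succ, Fin.val_castSucc]; omega
  have h := desnanot_jacobi_s10 (contiguousSubmatrix A (m + 2) i j hi hj) hA
  rwa [contiguousSubmatrix_submatrix A _ _ (by omega) (by omega) Fin.castSucc Fin.castSucc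
      (fun _ => rfl) (fun _ => rfl),
    contiguousSubmatrix_submatrix A _ _ (by omega) (by omega) Fin.succ Fin.succ
      (hsucc i) (hsucc j),
    contiguousSubmatrix_submatrix A _ _ (by omega) (by omega) Fin.castSucc Fin.succ
      (fun _ => rfl) (hsucc j),
    contiguousSubmatrix_submatrix A _ _ (by omega) (by omega) Fin.succ Fin.castSucc
      (hsucc i) (fun _ => rfl),
    contiguousSubmatrix_submatrix A _ _ (by omega) (by omega) _ _ (hinterior i) (hinterior j)] at h

lemma IsTPk.cminor_pos {n r s i j : ℕ} {A : Matrix (Fin n) (Fin n) ℝ} (hA : IsTPk A r)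
    (hs : s ≤ r) (hi : i + s ≤ n) (hj : j + s ≤ n) : 0 < cminor A s i j hi hj :=
  hA s hs _ _ (fun _ _ h => Nat.add_lt_add_left h i) (fun _ _ h => Nat.add_lt_add_left h j)

/-- If `A` is `TP_{k+2}` then every `2×2` contiguous minor of `D_k(A)` factors as
`det D_k(A)[{i,i+1},{j,j+1}] = det A[{i,…,i+k+1},{j,…,j+k+1}] · det A[{i+1,…,i+k},{j+1,…,j+k}]`,
and consequently is positive. -/
theorem Dmat_two_by_two_contiguous_minor {n k : ℕ} (A : Matrix (Fin n) (Fin n) ℝ)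
    (hA : IsTPk A (k + 2)) (i j : ℕ) (hi : i + k + 2 ≤ n) (hj : j + k + 2 ≤ n) :
    ((Dmat A k).submatrix
        (fun p : Fin 2 => (⟨i + p.1, by have := p.2; omega⟩ : Fin (n - k)))
        (fun p : Fin 2 => (⟨j + p.1, by have := p.2; omega⟩ : Fin (n - k)))).det
      = cminor A (k + 2) i j hi hj * cminor A k (i + 1) (j + 1) (by omega) (by omega) ∧
    0 < ((Dmat A k).submatrix
        (fun p : Fin 2 => (⟨i + p.1, by have := p.2; omega⟩ : Fin (n - k)))
        (fun p : Fin 2 => (⟨j + p.1, by have := p.2; omega⟩ : Fin (n - k)))).det := by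
  have hblock : 0 < cminor A (k + 2) i j hi hj := hA.cminor_pos le_rfl (by omega) (by omega)
  have hinner : 0 < cminor A k (i + 1) (j + 1) (by omega) (by omega) :=
    hA.cminor_pos (by omega) _ _
  have hfactor : ((Dmat A k).submatrix
        (fun p : Fin 2 => (⟨i + p.1, by omega⟩ : Fin (n - k)))
        (fun p : Fin 2 => (⟨j + p.1, by omega⟩ : Fin (n - k)))).det
      = cminor A (k + 2) i j hi hj * cminor A k (i + 1) (j + 1) (by omega) (by omega) := by
    rw [det_fin_two]
    -- the entries of `Dmat A k` are definitionally the minors `cminor A (k + 1)`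
    exact cminor_desnanot_jacobi A (by omega) (by omega) hblock.ne'
  exact ⟨hfactor, hfactor ▸ mul_pos hblock hinner⟩
end
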